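/- For an arbitrary static routing strategy (routes need not be nearest-neighbour and different users served by the same BS may have different routes), provided every backhaul hop has instantaneous rate at most R1, the max-min rate is at most ( max_{i ∈ {0,…,N}} c_i )^{-1}, where c_i = Σ_{u : σ(u)=i} 1/R_{a,u} + (f(i) − w_i)/R1 + 𝟙{i ≠ 0} · f(i)/R1 and f(i) is the number of users whose route passes through BS i. -/

import Mathlib

open Finset
open scoped Classical

/-- A self-backhauled network with an arbitrary static routing strategy: user `u` is
served by BS `σ u` and has a static route, a path of pairwise-distinct BSs starting at
the fiber site `0` and ending at `σ u` (followed by the access link of `u`). Every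
backhaul hop `(a, b)` has some instantaneous rate `rB a b` with `0 < rB a b ≤ R1`, and
the access link of user `u` has rate `Ra u > 0`. -/
structure RoutedNet (N U : ℕ) where
  /-- serving BS of each user -/
  σ : Fin (U + 1) → Fin (N + 1)
  /-- static route (list of BSs) of each user -/
  route : Fin (U + 1) → List (Fin (N + 1))
  route_nodup : ∀ u, (route u).Nodup
  route_head : ∀ u, (route u).head? = some 0
  route_last : ∀ u, (route u).getLast? = some (σ u)
  /-- upper bound on the backhaul rates -/
  R1 : ℝ
  hR1 : 0 < R1
  /-- instantaneous rate of the backhaul link from `a` to `b` -/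
  rB : Fin (N + 1) → Fin (N + 1) → ℝ
  hrB : ∀ a b, 0 < rB a b ∧ rB a b ≤ R1
  /-- instantaneous rate of the access link of each user -/
  Ra : Fin (U + 1) → ℝ
  hRa : ∀ u, 0 < Ra u

namespace RoutedNet

variable {N U : ℕ}

/-- Links: the access link of each user (`inl u`), or the backhaul link between an
ordered pair of BSs (`inr (a, b)`). -/
abbrev Link (N U : ℕ) := Fin (U + 1) ⊕ (Fin (N + 1) × Fin (N + 1))

/-- `l` is a hop on the route of user `u`: either the access link of `u`, or a pair of
consecutive BSs on the route of `u`. -/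
def isHop (net : RoutedNet N U) (l : Link N U) (u : Fin (U + 1)) : Prop :=
  match l with
  | .inl u' => u' = u
  | .inr q => q ∈ (net.route u).zip (net.route u).tail

/-- link `l` is incident to BS `j`. -/
def incident (net : RoutedNet N U) (l : Link N U) (j : Fin (N + 1)) : Prop :=
  match l with
  | .inl u => net.σ u = j
  | .inr q => j = q.1 ∨ j = q.2

/-- instantaneous rate of link `l`. -/
noncomputable def rate (net : RoutedNet N U) : Link N U → ℝ
  | .inl u => net.Ra u
  | .inr q => net.rB q.1 q.2

/-- Feasible scheduling matrix: entries in `[0,1]`, zero unless the link is a hop on the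
route of the user, and each (half-duplex) BS active at most `1` unit of time. -/
def Feasible (net : RoutedNet N U) (τ : Link N U → Fin (U + 1) → ℝ) : Prop :=
  (∀ l u, 0 ≤ τ l u ∧ τ l u ≤ 1) ∧
  (∀ l u, ¬ net.isHop l u → τ l u = 0) ∧
  ∀ j : Fin (N + 1),
    ∑ l : Link N U, ∑ u : Fin (U + 1), (if net.incident l j then τ l u else 0) ≤ 1

/-- End-to-end rate of user `u`: minimum long-term rate over the hops of its route. -/
noncomputable def e2e (net : RoutedNet N U) (τ : Link N U → Fin (U + 1) → ℝ)
    (u : Fin (U + 1)) : ℝ :=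
  (Finset.univ.filter fun l : Link N U => net.isHop l u).inf'
    ⟨Sum.inl u, Finset.mem_filter.mpr ⟨Finset.mem_univ _, rfl⟩⟩
    fun l => net.rate l * τ l u

/-- Effective load `f i`: number of users whose route passes through BS `i`. -/
noncomputable def f (net : RoutedNet N U) (i : Fin (N + 1)) : ℕ :=
  (Finset.univ.filter fun u : Fin (U + 1) => i ∈ net.route u).card

/-- Direct load `w i`: number of users served by BS `i`. -/
noncomputable def w (net : RoutedNet N U) (i : Fin (N + 1)) : ℕ :=
  (Finset.univ.filter fun u : Fin (U + 1) => net.σ u = i).card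

/-- Per-BS time coefficient
`c i = Σ_{u : σ u = i} 1/Ra u + (f i − w i)/R1 + 𝟙{i ≠ 0} · f i / R1`. -/
noncomputable def c (net : RoutedNet N U) (i : Fin (N + 1)) : ℝ :=
  (∑ u : Fin (U + 1), if net.σ u = i then (net.Ra u)⁻¹ else 0)
    + ((net.f i : ℝ) - (net.w i : ℝ)) / net.R1
    + (if i ≠ 0 then (net.f i : ℝ) / net.R1 else 0)

end RoutedNet

/-! If every user has end-to-end rate at least `θ ≥ 0`, every hop `l` of the route of `u`
carries `τ l u ≥ θ / rate l`. At BS `i`, user `u` therefore occupies at least `θ / Ra u` on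
its access link if `σ u = i`, at least `θ / R1` on the hop leaving `i` if its route goes on
past `i`, and at least `θ / R1` on the hop entering `i` if `i ≠ 0`; the last two hops differ
because a route never repeats a BS. Summing over users, the unit time budget of BS `i` gives
`θ c_i ≤ 1`, and `c_0 > 0` because every route starts at `0`. -/

namespace List

variable {α : Type*}

theorem IsChain.rel_of_mem_zip_tail {R : α → α → Prop} :
    ∀ {l : List α}, l.IsChain R → ∀ {a b : α}, (a, b) ∈ l.zip l.tail → R a b
  | [], _, _, _, h => by simp at h
  | [_], _, _, _, h => by simp at h
  | _ :: _ :: _, hl, _, _, h => by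
    rw [isChain_cons_cons] at hl
    rcases mem_cons.mp h with h | h
    · obtain ⟨rfl, rfl⟩ := Prod.mk.inj h
      exact hl.1
    · exact hl.2.rel_of_mem_zip_tail h

theorem exists_mem_zip_tail_of_getLast?_ne :
    ∀ {l : List α} {a : α}, a ∈ l → l.getLast? ≠ some a → ∃ b, (a, b) ∈ l.zip l.tail
  | [], _, h, _ => by simp at h
  | [_], _, h, hlast => by simp_all
  | x :: y :: t, a, h, hlast => by
    rcases mem_cons.mp h with rfl | h
    · exact ⟨y, mem_cons_self⟩
    · rw [getLast?_cons_cons] at hlast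
      obtain ⟨b, hb⟩ := exists_mem_zip_tail_of_getLast?_ne h hlast
      exact ⟨b, mem_cons_of_mem _ hb⟩

theorem exists_mem_zip_tail_of_head?_ne :
    ∀ {l : List α} {a : α}, a ∈ l → l.head? ≠ some a → ∃ b, (b, a) ∈ l.zip l.tail
  | [], _, h, _ => by simp at h
  | [_], _, h, hhead => by simp_all
  | x :: y :: t, a, h, hhead => by
    have h : a ∈ y :: t := (mem_cons.mp h).resolve_left fun hax => hhead (by simp [hax])
    by_cases hay : y = a
    · exact ⟨x, by simp [hay]⟩
    · obtain ⟨b, hb⟩ := exists_mem_zip_tail_of_head?_ne h (by simpa using hay)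
      exact ⟨b, mem_cons_of_mem _ hb⟩

end List

theorem Finset.ite_le_sum_of_exists {ι M : Type*} [AddCommMonoid M] [PartialOrder M]
    [IsOrderedAddMonoid M] {s : Finset ι} {g : ι → M} {p : Prop} [Decidable p] {a : M}
    (hg : ∀ x ∈ s, 0 ≤ g x) (h : p → ∃ x ∈ s, a ≤ g x) :
    (if p then a else 0) ≤ ∑ x ∈ s, g x := by
  split_ifs with hp
  · obtain ⟨x, hx, hax⟩ := h hp
    exact hax.trans (single_le_sum hg hx)
  · exact sum_nonneg hg

namespace RoutedNet

variable {N U : ℕ} (net : RoutedNet N U)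

theorem zero_mem_route (u : Fin (U + 1)) : 0 ∈ net.route u :=
  List.mem_of_mem_head? (net.route_head u)

theorem σ_mem_route (u : Fin (U + 1)) : net.σ u ∈ net.route u :=
  List.mem_of_getLast? (net.route_last u)

theorem rate_pos : ∀ l : Link N U, 0 < net.rate l
  | .inl u => net.hRa u
  | .inr q => (net.hrB q.1 q.2).1

theorem exists_isHop_from {i : Fin (N + 1)} {u : Fin (U + 1)} (hi : i ∈ net.route u)
    (hσ : net.σ u ≠ i) : ∃ b, net.isHop (.inr (i, b)) u :=
  List.exists_mem_zip_tail_of_getLast?_ne hi (by simpa [net.route_last u] using hσ)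

theorem exists_isHop_to {i : Fin (N + 1)} {u : Fin (U + 1)} (hi : i ∈ net.route u)
    (h0 : i ≠ 0) : ∃ a, net.isHop (.inr (a, i)) u :=
  List.exists_mem_zip_tail_of_head?_ne hi (by simpa [net.route_head u] using h0.symm)

theorem fst_ne_snd_of_isHop {q : Fin (N + 1) × Fin (N + 1)} {u : Fin (U + 1)}
    (h : net.isHop (.inr q) u) : q.1 ≠ q.2 :=
  (net.route_nodup u).isChain.rel_of_mem_zip_tail h

noncomputable def userLoad (i : Fin (N + 1)) (u : Fin (U + 1)) : ℝ :=
  (if net.σ u = i then (net.Ra u)⁻¹ else 0)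
    + (if i ∈ net.route u ∧ net.σ u ≠ i then net.R1⁻¹ else 0)
    + (if i ∈ net.route u ∧ i ≠ 0 then net.R1⁻¹ else 0)

theorem sum_userLoad (i : Fin (N + 1)) : ∑ u, net.userLoad i u = net.c i := by
  have h_from : ∀ u, (if i ∈ net.route u ∧ net.σ u ≠ i then net.R1⁻¹ else 0)
      = (if i ∈ net.route u then net.R1⁻¹ else 0) - (if net.σ u = i then net.R1⁻¹ else 0) := by
    intro u
    by_cases hσ : net.σ u = i
    · subst hσ
      simp [σ_mem_route]
    · simp [hσ]
  simp only [userLoad, c, f, w, sum_add_distrib, h_from, sum_sub_distrib]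
  by_cases h0 : i = 0 <;> simp [h0, Finset.sum_ite, div_eq_mul_inv, sub_mul]

theorem userLoad_zero_pos (u : Fin (U + 1)) : 0 < net.userLoad 0 u := by
  have := net.hRa u
  have := net.hR1
  by_cases hσ : net.σ u = 0 <;> simp [userLoad, hσ, zero_mem_route] <;> positivity

theorem c_zero_pos : 0 < net.c 0 :=
  net.sum_userLoad 0 ▸ sum_pos (fun u _ => net.userLoad_zero_pos u) univ_nonempty

noncomputable def busyTime (τ : Link N U → Fin (U + 1) → ℝ) (i : Fin (N + 1))
    (u : Fin (U + 1)) : ℝ :=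
  ∑ l, if net.incident l i then τ l u else 0

variable {net}

theorem Feasible.sum_busyTime_le_one {τ : Link N U → Fin (U + 1) → ℝ} (hτ : net.Feasible τ)
    (i : Fin (N + 1)) : ∑ u, net.busyTime τ i u ≤ 1 := by
  unfold busyTime
  rw [sum_comm]
  exact hτ.2.2 i

variable {τ : Link N U → Fin (U + 1) → ℝ} {θ : ℝ} {u : Fin (U + 1)}

theorem div_rate_le_of_le_e2e (hθ : θ ≤ net.e2e τ u) {l : Link N U} (hl : net.isHop l u) :
    θ / net.rate l ≤ τ l u := by
  have h_e2e : net.e2e τ u ≤ net.rate l * τ l u :=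
    inf'_le (fun l => net.rate l * τ l u) (mem_filter.mpr ⟨mem_univ l, hl⟩)
  rw [div_le_iff₀ (net.rate_pos l)]
  linarith

theorem div_R1_le_of_le_e2e (hθ0 : 0 ≤ θ) (hθ : θ ≤ net.e2e τ u)
    {q : Fin (N + 1) × Fin (N + 1)} (hq : net.isHop (.inr q) u) :
    θ / net.R1 ≤ τ (.inr q) u :=
  (div_le_div_of_nonneg_left hθ0 (net.hrB q.1 q.2).1 (net.hrB q.1 q.2).2).trans
    (div_rate_le_of_le_e2e hθ hq)

theorem sum_from_add_sum_to_le (hτ : net.Feasible τ) (i : Fin (N + 1)) :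
    (∑ q : Fin (N + 1) × Fin (N + 1), if q.1 = i then τ (.inr q) u else 0)
      + (∑ q : Fin (N + 1) × Fin (N + 1), if q.2 = i then τ (.inr q) u else 0)
      ≤ ∑ q : Fin (N + 1) × Fin (N + 1), if net.incident (.inr q) i then τ (.inr q) u else 0 := by
  rw [← sum_add_distrib]
  refine sum_le_sum fun q _ => ?_
  have hτ0 := (hτ.1 (.inr q) u).1
  by_cases h1 : q.1 = i <;> by_cases h2 : q.2 = i
  · have h_off : τ (.inr q) u = 0 :=
      hτ.2.1 _ _ fun hq => net.fst_ne_snd_of_isHop hq (h1.trans h2.symm)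
    simp [h1, h2, h_off]
  all_goals simp only [incident]; split_ifs <;> simp_all

theorem mul_userLoad_le_busyTime (hτ : net.Feasible τ) (hθ0 : 0 ≤ θ) (hθ : θ ≤ net.e2e τ u)
    (i : Fin (N + 1)) : θ * net.userLoad i u ≤ net.busyTime τ i u := by
  have hτ0 : ∀ l, 0 ≤ τ l u := fun l => (hτ.1 l u).1
  have h_access : (if net.σ u = i then θ * (net.Ra u)⁻¹ else 0)
      ≤ ∑ u', if net.incident (.inl u') i then τ (.inl u') u else 0 :=
    ite_le_sum_of_exists (fun _ _ => by split_ifs <;> simp [hτ0])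
      fun hσ => ⟨u, mem_univ u, by
        rw [if_pos (show net.incident (.inl u) i from hσ), ← div_eq_mul_inv]
        exact div_rate_le_of_le_e2e hθ (l := .inl u) rfl⟩
  have h_from : (if i ∈ net.route u ∧ net.σ u ≠ i then θ * net.R1⁻¹ else 0)
      ≤ ∑ q : Fin (N + 1) × Fin (N + 1), if q.1 = i then τ (.inr q) u else 0 :=
    ite_le_sum_of_exists (fun _ _ => by split_ifs <;> simp [hτ0])
      fun ⟨hi, hσ⟩ => by
        obtain ⟨b, hb⟩ := net.exists_isHop_from hi hσ
        refine ⟨(i, b), mem_univ _, ?_⟩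
        simpa [div_eq_mul_inv] using div_R1_le_of_le_e2e hθ0 hθ hb
  have h_to : (if i ∈ net.route u ∧ i ≠ 0 then θ * net.R1⁻¹ else 0)
      ≤ ∑ q : Fin (N + 1) × Fin (N + 1), if q.2 = i then τ (.inr q) u else 0 :=
    ite_le_sum_of_exists (fun _ _ => by split_ifs <;> simp [hτ0])
      fun ⟨hi, h0⟩ => by
        obtain ⟨a, ha⟩ := net.exists_isHop_to hi h0
        refine ⟨(a, i), mem_univ _, ?_⟩
        simpa [div_eq_mul_inv] using div_R1_le_of_le_e2e hθ0 hθ ha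
  have h_busy : net.busyTime τ i u
      = (∑ u', if net.incident (.inl u') i then τ (.inl u') u else 0)
        + ∑ q : Fin (N + 1) × Fin (N + 1), if net.incident (.inr q) i then τ (.inr q) u else 0 :=
    Fintype.sum_sum_type _
  simp only [userLoad, mul_add, mul_ite, mul_zero]
  linarith [sum_from_add_sum_to_le hτ i (u := u)]

theorem mul_c_le_one (hτ : net.Feasible τ) (hθ0 : 0 ≤ θ) (hθ : ∀ u, θ ≤ net.e2e τ u)
    (i : Fin (N + 1)) : θ * net.c i ≤ 1 :=
  calc θ * net.c i = ∑ u, θ * net.userLoad i u := by rw [← sum_userLoad, mul_sum]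
    _ ≤ ∑ u, net.busyTime τ i u := sum_le_sum fun u _ => mul_userLoad_le_busyTime hτ hθ0 (hθ u) i
    _ ≤ 1 := hτ.sum_busyTime_le_one i

end RoutedNet

/-- **Upper bound for arbitrary static routing (Corollary 1).** For an arbitrary static
routing strategy, with every backhaul hop of instantaneous rate at most `R1`, the
max-min rate (the supremum over feasible scheduling matrices of the minimum end-to-end
user rate) is at most `(max_i c_i)⁻¹`. -/
theorem maxmin_upper_bound_arbitrary_routing (N U : ℕ) (net : RoutedNet N U) :
    sSup {θ : ℝ | ∃ τ : RoutedNet.Link N U → Fin (U + 1) → ℝ,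
        net.Feasible τ ∧ θ = Finset.univ.inf' Finset.univ_nonempty (net.e2e τ)} ≤
      (Finset.univ.sup' Finset.univ_nonempty net.c)⁻¹ := by
  obtain ⟨i, -, hi⟩ := exists_mem_eq_sup' univ_nonempty net.c
  have hc_pos : 0 < net.c i := net.c_zero_pos.trans_le (hi ▸ le_sup' net.c (mem_univ 0))
  rw [hi]
  refine Real.sSup_le ?_ (inv_nonneg.mpr hc_pos.le)
  rintro θ ⟨τ, hτ, rfl⟩
  rcases lt_or_ge (univ.inf' univ_nonempty (net.e2e τ)) 0 with hθ_neg | hθ0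
  · exact hθ_neg.le.trans (inv_nonneg.mpr hc_pos.le)
  rw [← one_div, le_div_iff₀ hc_pos]
  exact net.mul_c_le_one hτ hθ0 (fun u => inf'_le _ (mem_univ u)) i
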